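/- Let f:[0,1]→ℝ be convex, suppose on an interval [x−t,x+t]⊆[0,1] with t>0 we have Δ(f,x,t) ≥ ε > 0, and fix α∈(0,1). Assume that for each u∈(x−αt, x+αt) there is a well-defined local approximation modulus ω(f,u,(1−α)ε) = min{s∈[0,min{u,1−u}] : Δ(f,u,s) ≥ (1−α)ε} > 0. Then ∫_{x−t}^{x+t} ω(f,u,(1−α)ε)^{−1} du ≥ 2α/(1+α). -/

import Mathlib

open MeasureTheory

noncomputable def Δ (f : ℝ → ℝ) (x t : ℝ) : ℝ := (f (x - t) + f (x + t)) / 2 - f x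

/-! For `u = x ± d` with `d < α t`, the interval `[u - (t + d), u + (t + d)]` contains
`[x - t, x + t]` and shares an endpoint with it. Two chord inequalities for the convex `f` give
`t Δ(f, u, t + d) ≥ (t - d) Δ(f, x, t) ≥ (1 - α) t ε`, so `ω(u) ≤ t + d < (1 + α) t`.
Integrating `1 / ω ≥ 1 / ((1 + α) t)` over `(x - α t, x + α t)` gives `2 α / (1 + α)`. -/

open Set

theorem ConvexOn.sub_mul_le_of_le_of_le {s : Set ℝ} {f : ℝ → ℝ} (hf : ConvexOn ℝ s f)
    {x y z : ℝ} (hx : x ∈ s) (hz : z ∈ s) (hxy : x ≤ y) (hyz : y ≤ z) :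
    (z - x) * f y ≤ (z - y) * f x + (y - x) * f z := by
  rcases hxy.eq_or_lt with rfl | hxy
  · simp
  rcases hyz.eq_or_lt with rfl | hyz
  · simp
  exact hf.secant_mono_aux1 hx hz hxy hyz

theorem ConvexOn.comp_neg {s : Set ℝ} {f : ℝ → ℝ} (hf : ConvexOn ℝ s f) :
    ConvexOn ℝ (-s) (fun y ↦ f (-y)) :=
  hf.comp_linearMap (-LinearMap.id)

theorem Δ_comp_neg (f : ℝ → ℝ) (x t : ℝ) : Δ (fun y ↦ f (-y)) (-x) t = Δ f x t := by
  rw [Δ, Δ, show -x - t = -(x + t) by ring, show -x + t = -(x - t) by ring]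
  simp only [neg_neg, add_comm]

theorem ConvexOn.sub_mul_Δ_le_mul_Δ_add {s : Set ℝ} {f : ℝ → ℝ} (hf : ConvexOn ℝ s f)
    {x t d : ℝ} (hd : 0 ≤ d) (hdt : d ≤ t) (hl : x - t ∈ s) (hr : x + t + 2 * d ∈ s) :
    (t - d) * Δ f x t ≤ t * Δ f (x + d) (t + d) := by
  have hIcc := hf.1.ordConnected.out hl hr
  have hx : x ∈ s := hIcc ⟨by linarith, by linarith⟩
  have hxt : x + t ∈ s := hIcc ⟨by linarith, by linarith⟩
  have hmid := hf.sub_mul_le_of_le_of_le hx hxt (le_add_of_nonneg_right hd) (by linarith)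
  have hright := hf.sub_mul_le_of_le_of_le hl hr (by linarith) (by linarith : x + t ≤ x + t + 2 * d)
  rw [Δ, Δ, show x + d - (t + d) = x - t by ring, show x + d + (t + d) = x + t + 2 * d by ring]
  ring_nf at hmid hright ⊢
  linear_combination hmid + hright / 4

theorem ConvexOn.sub_mul_Δ_le_mul_Δ {s : Set ℝ} {f : ℝ → ℝ} (hf : ConvexOn ℝ s f)
    {x u t : ℝ} (hut : |u - x| ≤ t) (hl : u - (t + |u - x|) ∈ s) (hr : u + (t + |u - x|) ∈ s) :
    (t - |u - x|) * Δ f x t ≤ t * Δ f u (t + |u - x|) := by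
  rcases le_total x u with hxu | hux
  · obtain ⟨d, hd, rfl⟩ : ∃ d, 0 ≤ d ∧ u = x + d := ⟨u - x, by linarith, by ring⟩
    rw [add_sub_cancel_left, abs_of_nonneg hd] at *
    exact hf.sub_mul_Δ_le_mul_Δ_add hd hut (by convert hl using 1; ring)
      (by convert hr using 1; ring)
  · obtain ⟨d, hd, rfl⟩ : ∃ d, 0 ≤ d ∧ u = x - d := ⟨x - u, by linarith, by ring⟩
    rw [sub_sub_cancel_left, abs_neg, abs_of_nonneg hd] at *
    have := hf.comp_neg.sub_mul_Δ_le_mul_Δ_add (x := -x) hd hut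
      (by simp only [mem_neg]; convert hr using 1; ring)
      (by simp only [mem_neg]; convert hl using 1; ring)
    rwa [Δ_comp_neg, show -x + d = -(x - d) by ring, Δ_comp_neg] at this

theorem IsLeast.le_of_imp {α : Type*} [LinearOrder α] {a m w s : α} {P : α → Prop}
    (h : IsLeast {s ∈ Icc a m | P s} w) (has : a ≤ s) (hP : s ≤ m → P s) : w ≤ s := by
  by_contra! hsw
  have hsm : s ≤ m := hsw.le.trans h.1.1.2
  exact (h.2 ⟨⟨has, hsm⟩, hP hsm⟩).not_gt hsw

theorem modulus_le_of_convexOn {f : ℝ → ℝ} (hf : ConvexOn ℝ (Icc 0 1) f) {x t ε α u w : ℝ}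
    (ht : 0 < t) (hε : 0 ≤ ε) (hΔ : ε ≤ Δ f x t) (hα : α ≤ 1) (hu : |u - x| ≤ α * t)
    (hw : IsLeast {s ∈ Icc 0 (min u (1 - u)) | (1 - α) * ε ≤ Δ f u s} w) :
    w ≤ t + |u - x| := by
  have hs : 0 ≤ t + |u - x| := by positivity
  refine hw.le_of_imp hs fun hmin ↦ ?_
  have hut : |u - x| ≤ t := hu.trans (by nlinarith)
  have hleft := hmin.trans (min_le_left u (1 - u))
  have hright := hmin.trans (min_le_right u (1 - u))
  have hconv := hf.sub_mul_Δ_le_mul_Δ hut ⟨by linarith, by linarith⟩ ⟨by linarith, by linarith⟩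
  refine le_of_mul_le_mul_left ?_ ht
  calc t * ((1 - α) * ε) ≤ (t - |u - x|) * ε := by nlinarith
    _ ≤ (t - |u - x|) * Δ f x t := mul_le_mul_of_nonneg_left hΔ (by linarith)
    _ ≤ t * Δ f u (t + |u - x|) := hconv

theorem inverse_modulus_integral_lower_bound_general (f : ℝ → ℝ)
    (hf : ConvexOn ℝ (Set.Icc (0:ℝ) 1) f)
    (x t ε α : ℝ) (ht : 0 < t)
    (hε : 0 < ε) (hΔ : ε ≤ Δ f x t) (hα : α ∈ Set.Ioo (0:ℝ) 1)
    (ω : ℝ → ℝ)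
    (hω : ∀ u ∈ Set.Ioo (x - α * t) (x + α * t),
      0 < ω u ∧
        IsLeast {s ∈ Set.Icc (0:ℝ) (min u (1 - u)) | (1 - α) * ε ≤ Δ f u s} (ω u)) :
    ENNReal.ofReal (2 * α / (1 + α)) ≤
      ∫⁻ u in Set.Icc (x - t) (x + t), ENNReal.ofReal (ω u)⁻¹ := by
  obtain ⟨hα0, hα1⟩ := hα
  have hω_le : ∀ u ∈ Ioo (x - α * t) (x + α * t), ω u ≤ (1 + α) * t := fun u hu ↦ by
    have hux : |u - x| < α * t := abs_sub_lt_iff.2 ⟨by linarith [hu.2], by linarith [hu.1]⟩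
    linarith [modulus_le_of_convexOn hf ht hε.le hΔ hα1.le hux.le (hω u hu).2]
  calc ENNReal.ofReal (2 * α / (1 + α))
      = ENNReal.ofReal ((1 + α) * t)⁻¹ * volume (Ioo (x - α * t) (x + α * t)) := by
        rw [Real.volume_Ioo, ← ENNReal.ofReal_mul (by positivity)]
        congr 1
        field_simp
        ring
    _ = ∫⁻ _ in Ioo (x - α * t) (x + α * t), ENNReal.ofReal ((1 + α) * t)⁻¹ :=
        (setLIntegral_const _ _).symm
    _ ≤ ∫⁻ u in Ioo (x - α * t) (x + α * t), ENNReal.ofReal (ω u)⁻¹ :=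
        setLIntegral_mono_ae' measurableSet_Ioo (ae_of_all _ fun u hu ↦
          ENNReal.ofReal_le_ofReal (inv_anti₀ (hω u hu).1 (hω_le u hu)))
    _ ≤ ∫⁻ u in Icc (x - t) (x + t), ENNReal.ofReal (ω u)⁻¹ :=
        lintegral_mono_set fun u hu ↦ ⟨by nlinarith [hu.1], by nlinarith [hu.2]⟩

theorem inverse_modulus_integral_lower_bound (f : ℝ → ℝ)
    (hf : ConvexOn ℝ (Set.Icc (0:ℝ) 1) f)
    (x t ε α : ℝ) (ht : 0 < t)
    (hsub : Set.Icc (x - t) (x + t) ⊆ Set.Icc 0 1)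
    (hε : 0 < ε) (hΔ : ε ≤ Δ f x t) (hα : α ∈ Set.Ioo (0:ℝ) 1)
    (ω : ℝ → ℝ) (hω_nonneg : ∀ u, 0 ≤ ω u)
    (hω : ∀ u ∈ Set.Ioo (x - α * t) (x + α * t),
      0 < ω u ∧
        IsLeast {s ∈ Set.Icc (0:ℝ) (min u (1 - u)) | (1 - α) * ε ≤ Δ f u s} (ω u)) :
    ENNReal.ofReal (2 * α / (1 + α)) ≤
      ∫⁻ u in Set.Icc (x - t) (x + t), ENNReal.ofReal (ω u)⁻¹ :=
  inverse_modulus_integral_lower_bound_general f hf x t ε α ht hε hΔ hα ω hω
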